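/- arXiv:2605.13639 — 2 statements merged into one kernel-verified Lean document; each statement's English description precedes it below -/
import Mathlib

section
/- Let π be a policy, π̃ another policy, ω ∈ [0,1], and define π' = (1-ω)π + ωπ̃. Let Q : S × A → ℝ and χ = ‖H Q − H_{π̃} Q‖∞. Then ‖Q^{π} − Q^{π'}‖∞ ≤ (ω/(1−γ)) (‖Q* − Q^{π}‖∞ + 2 ‖Q − Q^{π}‖∞ + χ). -/
noncomputable section

/-- A policy assigns to each state a probability distribution over actions. -/
def IsPolicy {S A : Type*} [Fintype A] (π : S → A → ℝ) : Prop :=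
  (∀ s a, 0 ≤ π s a) ∧ ∀ s, ∑ a, π s a = 1

/-- A transition kernel assigns to each state-action pair a probability distribution over states. -/
def IsKernel {S A : Type*} [Fintype S] (p : S → A → S → ℝ) : Prop :=
  (∀ s a s', 0 ≤ p s a s') ∧ ∀ s a, ∑ s', p s a s' = 1

/-- Sup norm on `S × A → ℝ` (functions `S → A → ℝ`). -/
def supNorm {S A : Type*} [Fintype S] [Fintype A] [Nonempty S] [Nonempty A]
    (Q : S → A → ℝ) : ℝ :=
  Finset.univ.sup' Finset.univ_nonempty (fun sa : S × A => |Q sa.1 sa.2|)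

/-- Total variation distance between two distributions on a finite set. -/
def dTV {Ω : Type*} [Fintype Ω] (p₁ p₂ : Ω → ℝ) : ℝ :=
  (∑ x, |p₁ x - p₂ x|) / 2

/-- Weighted ℓ₂ norm with weights ν. -/
def nuNorm {S A : Type*} [Fintype S] [Fintype A] (ν : S → A → ℝ) (Q : S → A → ℝ) : ℝ :=
  Real.sqrt (∑ s, ∑ a, ν s a * (Q s a) ^ 2)

/-- Weighted ℓ₂ inner product with weights ν. -/
def nuInner {S A : Type*} [Fintype S] [Fintype A] (ν : S → A → ℝ) (Q₁ Q₂ : S → A → ℝ) : ℝ :=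
  ∑ s, ∑ a, ν s a * Q₁ s a * Q₂ s a

/-- Bellman operator associated with a policy π. -/
def bellman {S A : Type*} [Fintype S] [Fintype A]
    (p : S → A → S → ℝ) (R : S → A → ℝ) (γ : ℝ) (π : S → A → ℝ)
    (Q : S → A → ℝ) : S → A → ℝ :=
  fun s a => R s a + γ * ∑ s', p s a s' * ∑ a', π s' a' * Q s' a'

/-- Bellman optimality operator. -/
def bellmanOpt {S A : Type*} [Fintype S] [Fintype A] [Nonempty A]
    (p : S → A → S → ℝ) (R : S → A → ℝ) (γ : ℝ)
    (Q : S → A → ℝ) : S → A → ℝ :=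
  fun s a => R s a + γ * ∑ s', p s a s' *
    Finset.univ.sup' Finset.univ_nonempty (fun a' => Q s' a')

/-- Expected operator F̄(Q,π) = (I − D)Q + D H_π Q, where D has diagonal entries μ_b(s)π_b(a|s). -/
def Fbar {S A : Type*} [Fintype S] [Fintype A]
    (p : S → A → S → ℝ) (R : S → A → ℝ) (γ : ℝ)
    (μb : S → ℝ) (πb : S → A → ℝ) (π : S → A → ℝ) (Q : S → A → ℝ) : S → A → ℝ :=
  fun s a => (1 - μb s * πb s a) * Q s a + μb s * πb s a * bellman p R γ π Q s a

/-- Importance-sampling TD operator, for y = ((s₁,a₁),(s₂,a₂)). -/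
def FIS {S A : Type*} [Fintype S] [Fintype A] [DecidableEq S] [DecidableEq A]
    (R : S → A → ℝ) (γ : ℝ) (πb : S → A → ℝ)
    (Q : S → A → ℝ) (y : (S × A) × S × A) (π : S → A → ℝ) : S → A → ℝ :=
  fun s a => if (s, a) = y.1 then
      R y.1.1 y.1.2 + γ * (π y.2.1 y.2.2 / πb y.2.1 y.2.2) * Q y.2.1 y.2.2
    else Q s a

/-- Expected-TD operator, for u = (s₁,a₁,s₂). -/
def FETD {S A : Type*} [Fintype S] [Fintype A] [DecidableEq S] [DecidableEq A]
    (R : S → A → ℝ) (γ : ℝ)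
    (Q : S → A → ℝ) (u : S × A × S) (π : S → A → ℝ) : S → A → ℝ :=
  fun s a => if (s, a) = (u.1, u.2.1) then
      R u.1 u.2.1 + γ * ∑ a', π u.2.2 a' * Q u.2.2 a'
    else Q s a

/-- State transition matrix induced by a policy. -/
def Pmat {S A : Type*} [Fintype A] (p : S → A → S → ℝ) (π : S → A → ℝ) : Matrix S S ℝ :=
  Matrix.of fun s s' => ∑ a, π s a * p s a s'

end

/-!
Write `π'` for the mixture. Since `H_{π'} Q^π = (1 - ω) Q^π + ω H_{π̃} Q^π`, the residual of `Q^π`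
for the `γ`-contraction `H_{π'}` is `ω (Q^π - H_{π̃} Q^π)`, so the a priori estimate of the Banach
fixed point theorem gives `‖Q^π - Q^{π'}‖ ≤ ω ‖Q^π - H_{π̃} Q^π‖ / (1 - γ)`. Splitting this residual
through `H Q^π`, `H Q` and `H_{π̃} Q` costs `‖Q^π - H Q^π‖ + 2γ ‖Q - Q^π‖ + χ`, and the first term
is at most `‖Q* - Q^π‖` because `Q^π ≤ H Q^π ≤ H Q* = Q*`. The comparison `Q^π ≤ Q*` is a maximum
principle: `Q^π - Q* ≤ γ P^π (Q^π - Q*)` with `γ < 1` forces `Q^π - Q* ≤ 0`.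
-/

open Finset

lemma sum_mul_le_of_sum_eq_one {ι : Type*} [Fintype ι] {w x : ι → ℝ} {c : ℝ}
    (hw : ∀ i, 0 ≤ w i) (hw1 : ∑ i, w i = 1) (hx : ∀ i, x i ≤ c) : ∑ i, w i * x i ≤ c :=
  calc ∑ i, w i * x i ≤ ∑ i, w i * c := by gcongr with i; exacts [hw i, hx i]
    _ = c := by rw [← sum_mul, hw1, one_mul]

lemma abs_sum_mul_le_of_sum_eq_one {ι : Type*} [Fintype ι] {w x : ι → ℝ} {c : ℝ}
    (hw : ∀ i, 0 ≤ w i) (hw1 : ∑ i, w i = 1) (hx : ∀ i, |x i| ≤ c) :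
    |∑ i, w i * x i| ≤ c := by
  have hneg := sum_mul_le_of_sum_eq_one (x := -x) hw hw1 fun i => neg_le.1 (abs_le.1 (hx i)).1
  simp only [Pi.neg_apply, mul_neg, sum_neg_distrib, neg_le] at hneg
  exact abs_le.2 ⟨hneg, sum_mul_le_of_sum_eq_one hw hw1 fun i => (abs_le.1 (hx i)).2⟩

lemma abs_sup'_sub_sup'_le {ι : Type*} [Fintype ι] [Nonempty ι] {f g : ι → ℝ} {c : ℝ}
    (h : ∀ i, |f i - g i| ≤ c) :
    |univ.sup' univ_nonempty f - univ.sup' univ_nonempty g| ≤ c := by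
  have sup'_le_sup'_add : ∀ f g : ι → ℝ, (∀ i, f i ≤ g i + c) →
      univ.sup' univ_nonempty f ≤ univ.sup' univ_nonempty g + c := fun f g hfg =>
    sup'_le _ _ fun i _ => (hfg i).trans (add_le_add_left (le_sup' g (mem_univ i)) c)
  rw [abs_sub_le_iff, sub_le_iff_le_add', sub_le_iff_le_add']
  exact ⟨sup'_le_sup'_add f g fun i => by linarith [abs_sub_le_iff.1 (h i)],
    sup'_le_sup'_add g f fun i => by linarith [abs_sub_le_iff.1 (h i)]⟩

section SupNorm

variable {S A : Type*} [Fintype S] [Fintype A]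

lemma abs_apply_le_norm (Q : S → A → ℝ) (s : S) (a : A) : |Q s a| ≤ ‖Q‖ :=
  (norm_le_pi_norm (Q s) a).trans (norm_le_pi_norm Q s)

lemma norm_le_of_forall_abs_le {Q : S → A → ℝ} {c : ℝ} (hc : 0 ≤ c)
    (h : ∀ s a, |Q s a| ≤ c) : ‖Q‖ ≤ c :=
  (pi_norm_le_iff_of_nonneg hc).2 fun s => (pi_norm_le_iff_of_nonneg hc).2 (h s)

lemma supNorm_eq_norm [Nonempty S] [Nonempty A] (Q : S → A → ℝ) : supNorm Q = ‖Q‖ := by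
  have le_supNorm : ∀ s a, |Q s a| ≤ supNorm Q := fun s a =>
    le_sup' (fun sa : S × A => |Q sa.1 sa.2|) (mem_univ (s, a))
  refine le_antisymm (sup'_le _ _ fun sa _ => abs_apply_le_norm Q sa.1 sa.2) ?_
  let s₀ : S := Classical.arbitrary S
  let a₀ : A := Classical.arbitrary A
  exact norm_le_of_forall_abs_le ((abs_nonneg (Q s₀ a₀)).trans (le_supNorm s₀ a₀)) le_supNorm

end SupNorm

section PolicyTransition

variable {S A : Type*} [Fintype S] [Fintype A] (p : S → A → S → ℝ)

def policyTransition (π Q : S → A → ℝ) : S → A → ℝ :=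
  fun s a => ∑ s', p s a s' * ∑ a', π s' a' * Q s' a'

lemma bellman_eq_add_smul (R : S → A → ℝ) (γ : ℝ) (π Q : S → A → ℝ) :
    bellman p R γ π Q = R + γ • policyTransition p π Q :=
  rfl

lemma policyTransition_sub (π Q₁ Q₂ : S → A → ℝ) :
    policyTransition p π (Q₁ - Q₂) = policyTransition p π Q₁ - policyTransition p π Q₂ := by
  ext s a
  simp only [policyTransition, Pi.sub_apply, mul_sub, sum_sub_distrib]

lemma policyTransition_linearComb (π₁ π₂ Q : S → A → ℝ) (c₁ c₂ : ℝ) :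
    policyTransition p (fun s a => c₁ * π₁ s a + c₂ * π₂ s a) Q
      = c₁ • policyTransition p π₁ Q + c₂ • policyTransition p π₂ Q := by
  ext s a
  simp only [policyTransition, Pi.add_apply, Pi.smul_apply, smul_eq_mul, add_mul, mul_sum,
    sum_add_distrib, mul_add]
  congr 1 <;> exact sum_congr rfl fun _ _ => sum_congr rfl fun _ _ => by ring

lemma bellman_sub_bellman (R : S → A → ℝ) (γ : ℝ) (π Q₁ Q₂ : S → A → ℝ) :
    bellman p R γ π Q₁ - bellman p R γ π Q₂ = γ • policyTransition p π (Q₁ - Q₂) := by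
  rw [bellman_eq_add_smul, bellman_eq_add_smul, policyTransition_sub, smul_sub,
    add_sub_add_left_eq_sub]

lemma bellman_convexComb (R : S → A → ℝ) (γ ω : ℝ) (π₁ π₂ Q : S → A → ℝ) :
    bellman p R γ (fun s a => (1 - ω) * π₁ s a + ω * π₂ s a) Q
      = (1 - ω) • bellman p R γ π₁ Q + ω • bellman p R γ π₂ Q := by
  simp only [bellman_eq_add_smul, policyTransition_linearComb]
  module

variable {p}

lemma norm_policyTransition_le (hp : IsKernel p) {π : S → A → ℝ} (hπ : IsPolicy π)
    (Q : S → A → ℝ) : ‖policyTransition p π Q‖ ≤ ‖Q‖ :=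
  norm_le_of_forall_abs_le (norm_nonneg Q) fun s a =>
    abs_sum_mul_le_of_sum_eq_one (hp.1 s a) (hp.2 s a) fun s' =>
      abs_sum_mul_le_of_sum_eq_one (hπ.1 s') (hπ.2 s') fun a' => abs_apply_le_norm Q s' a'

lemma nonpos_of_le_smul_policyTransition [Nonempty S] [Nonempty A] (hp : IsKernel p)
    {π : S → A → ℝ} (hπ : IsPolicy π) {γ : ℝ} (hγ₀ : 0 ≤ γ) (hγ₁ : γ < 1)
    {f : S → A → ℝ} (hf : f ≤ γ • policyTransition p π f) : f ≤ 0 := by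
  obtain ⟨⟨s₀, a₀⟩, hmax⟩ := Finite.exists_max fun sa : S × A => f sa.1 sa.2
  have hM : f s₀ a₀ ≤ γ * f s₀ a₀ :=
    calc f s₀ a₀ ≤ γ * policyTransition p π f s₀ a₀ := hf s₀ a₀
      _ ≤ γ * f s₀ a₀ := by
        gcongr
        exact sum_mul_le_of_sum_eq_one (hp.1 s₀ a₀) (hp.2 s₀ a₀) fun s' =>
          sum_mul_le_of_sum_eq_one (hπ.1 s') (hπ.2 s') fun a' => hmax (s', a')
  have hM₀ : f s₀ a₀ ≤ 0 := by nlinarith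
  exact fun s a => (hmax (s, a)).trans hM₀

end PolicyTransition

section Bellman

variable {S A : Type*} [Fintype S] [Fintype A] {p : S → A → S → ℝ} (R : S → A → ℝ) {γ : ℝ}

lemma norm_bellman_sub_le (hp : IsKernel p) {π : S → A → ℝ} (hπ : IsPolicy π) (hγ : 0 ≤ γ)
    (Q₁ Q₂ : S → A → ℝ) :
    ‖bellman p R γ π Q₁ - bellman p R γ π Q₂‖ ≤ γ * ‖Q₁ - Q₂‖ := by
  rw [bellman_sub_bellman, norm_smul, Real.norm_of_nonneg hγ]
  exact mul_le_mul_of_nonneg_left (norm_policyTransition_le hp hπ _) hγ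

lemma bellman_contractingWith (hp : IsKernel p) {π : S → A → ℝ} (hπ : IsPolicy π)
    (hγ₀ : 0 ≤ γ) (hγ₁ : γ < 1) : ContractingWith γ.toNNReal (bellman p R γ π) := by
  refine ⟨by simpa using hγ₁, LipschitzWith.of_dist_le_mul fun Q₁ Q₂ => ?_⟩
  rw [dist_eq_norm, dist_eq_norm, Real.coe_toNNReal γ hγ₀]
  exact norm_bellman_sub_le R hp hπ hγ₀ Q₁ Q₂

lemma bellman_le_bellmanOpt [Nonempty A] (hp : ∀ s a s', 0 ≤ p s a s') {π : S → A → ℝ}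
    (hπ : IsPolicy π) (hγ : 0 ≤ γ) (Q : S → A → ℝ) :
    bellman p R γ π Q ≤ bellmanOpt p R γ Q := fun s a => by
  unfold bellman bellmanOpt
  gcongr with s' _
  · exact hp s a s'
  · exact sum_mul_le_of_sum_eq_one (hπ.1 s') (hπ.2 s') fun a' =>
      le_sup' (fun a' => Q s' a') (mem_univ a')

lemma bellmanOpt_mono [Nonempty A] (hp : ∀ s a s', 0 ≤ p s a s') (hγ : 0 ≤ γ) :
    Monotone (bellmanOpt p R γ) := fun Q₁ Q₂ hQ s a => by
  unfold bellmanOpt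
  gcongr with s' _
  · exact hp s a s'
  · exact hQ _ _

lemma norm_bellmanOpt_sub_le [Nonempty A] (hp : IsKernel p) (hγ : 0 ≤ γ)
    (Q₁ Q₂ : S → A → ℝ) :
    ‖bellmanOpt p R γ Q₁ - bellmanOpt p R γ Q₂‖ ≤ γ * ‖Q₁ - Q₂‖ := by
  refine norm_le_of_forall_abs_le (by positivity) fun s a => ?_
  have hdiff : (bellmanOpt p R γ Q₁ - bellmanOpt p R γ Q₂) s a
      = γ * ∑ s', p s a s' * (univ.sup' univ_nonempty (fun a' => Q₁ s' a')
          - univ.sup' univ_nonempty (fun a' => Q₂ s' a')) := by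
    simp only [Pi.sub_apply, bellmanOpt, mul_sub, sum_sub_distrib]
    ring
  rw [hdiff, abs_mul, abs_of_nonneg hγ]
  gcongr
  exact abs_sum_mul_le_of_sum_eq_one (hp.1 s a) (hp.2 s a) fun s' =>
    abs_sup'_sub_sup'_le fun a' => abs_apply_le_norm (Q₁ - Q₂) s' a'

end Bellman

lemma IsPolicy.convexComb {S A : Type*} [Fintype A] {π₁ π₂ : S → A → ℝ} (hπ₁ : IsPolicy π₁)
    (hπ₂ : IsPolicy π₂) {ω : ℝ} (hω₀ : 0 ≤ ω) (hω₁ : ω ≤ 1) :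
    IsPolicy (fun s a => (1 - ω) * π₁ s a + ω * π₂ s a) := by
  refine ⟨fun s a => by nlinarith [hπ₁.1 s a, hπ₂.1 s a], fun s => ?_⟩
  rw [sum_add_distrib, ← mul_sum, ← mul_sum, hπ₁.2 s, hπ₂.2 s]
  ring

section FixedPoints

variable {S A : Type*} [Fintype S] [Fintype A] [Nonempty S] [Nonempty A] {p : S → A → S → ℝ}
  {R : S → A → ℝ} {γ : ℝ} {π : S → A → ℝ} {Qstar Qpi : S → A → ℝ}

lemma le_of_isFixedPt_bellman_of_isFixedPt_bellmanOpt (hp : IsKernel p)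
    (hπ : IsPolicy π) (hγ₀ : 0 ≤ γ) (hγ₁ : γ < 1)
    (hQstar : bellmanOpt p R γ Qstar = Qstar) (hQpi : bellman p R γ π Qpi = Qpi) :
    Qpi ≤ Qstar := by
  refine sub_nonpos.1 (nonpos_of_le_smul_policyTransition hp hπ hγ₀ hγ₁ ?_)
  calc Qpi - Qstar = bellman p R γ π Qpi - bellmanOpt p R γ Qstar := by rw [hQpi, hQstar]
    _ ≤ bellman p R γ π Qpi - bellman p R γ π Qstar :=
      sub_le_sub_left (bellman_le_bellmanOpt R hp.1 hπ hγ₀ Qstar) _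
    _ = γ • policyTransition p π (Qpi - Qstar) := bellman_sub_bellman p R γ π Qpi Qstar

lemma norm_sub_bellmanOpt_le (hp : IsKernel p) (hπ : IsPolicy π) (hγ₀ : 0 ≤ γ)
    (hγ₁ : γ < 1) (hQstar : bellmanOpt p R γ Qstar = Qstar)
    (hQpi : bellman p R γ π Qpi = Qpi) :
    ‖Qpi - bellmanOpt p R γ Qpi‖ ≤ ‖Qstar - Qpi‖ := by
  have hlow : Qpi ≤ bellmanOpt p R γ Qpi :=
    hQpi.ge.trans (bellman_le_bellmanOpt R hp.1 hπ hγ₀ Qpi)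
  have hhigh : bellmanOpt p R γ Qpi ≤ Qstar := hQstar ▸ bellmanOpt_mono R hp.1 hγ₀
    (le_of_isFixedPt_bellman_of_isFixedPt_bellmanOpt hp hπ hγ₀ hγ₁ hQstar hQpi)
  refine norm_le_of_forall_abs_le (norm_nonneg _) fun s a => ?_
  rw [Pi.sub_apply, Pi.sub_apply, abs_sub_comm, abs_of_nonneg (sub_nonneg.2 (hlow s a))]
  exact (sub_le_sub_right (hhigh s a) _).trans
    ((le_abs_self _).trans (abs_apply_le_norm (Qstar - Qpi) s a))

lemma norm_sub_bellman_le (hp : IsKernel p) (hπ : IsPolicy π) {πt : S → A → ℝ}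
    (hπt : IsPolicy πt) (hγ₀ : 0 ≤ γ) (hγ₁ : γ < 1)
    (hQstar : bellmanOpt p R γ Qstar = Qstar) (hQpi : bellman p R γ π Qpi = Qpi)
    (Q : S → A → ℝ) :
    ‖Qpi - bellman p R γ πt Qpi‖
      ≤ ‖Qstar - Qpi‖ + 2 * ‖Q - Qpi‖ + ‖bellmanOpt p R γ Q - bellman p R γ πt Q‖ := by
  calc ‖Qpi - bellman p R γ πt Qpi‖
      = ‖(Qpi - bellmanOpt p R γ Qpi) + (bellmanOpt p R γ Qpi - bellmanOpt p R γ Q)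
          + (bellmanOpt p R γ Q - bellman p R γ πt Q)
          + (bellman p R γ πt Q - bellman p R γ πt Qpi)‖ := by congr 1; abel
    _ ≤ ‖Qstar - Qpi‖ + γ * ‖Qpi - Q‖ + ‖bellmanOpt p R γ Q - bellman p R γ πt Q‖
          + γ * ‖Q - Qpi‖ := by
      refine norm_add₄_le.trans ?_
      gcongr
      · exact norm_sub_bellmanOpt_le hp hπ hγ₀ hγ₁ hQstar hQpi
      · exact norm_bellmanOpt_sub_le R hp hγ₀ Qpi Q
      · exact norm_bellman_sub_le R hp hπt hγ₀ Q Qpi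
    _ ≤ ‖Qstar - Qpi‖ + 2 * ‖Q - Qpi‖ + ‖bellmanOpt p R γ Q - bellman p R γ πt Q‖ := by
      rw [norm_sub_rev Qpi Q]
      nlinarith [norm_nonneg (Q - Qpi)]

end FixedPoints

lemma norm_sub_isFixedPt_bellman_convexComb_le {S A : Type*} [Fintype S] [Fintype A]
    {p : S → A → S → ℝ} (hp : IsKernel p) {R : S → A → ℝ} {γ : ℝ} (hγ₀ : 0 ≤ γ) (hγ₁ : γ < 1)
    {π πt : S → A → ℝ} (hπ : IsPolicy π) (hπt : IsPolicy πt) {ω : ℝ} (hω₀ : 0 ≤ ω)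
    (hω₁ : ω ≤ 1) {Qpi Qpi' : S → A → ℝ} (hQpi : bellman p R γ π Qpi = Qpi)
    (hQpi' : bellman p R γ (fun s a => (1 - ω) * π s a + ω * πt s a) Qpi' = Qpi') :
    ‖Qpi - Qpi'‖ ≤ ω / (1 - γ) * ‖Qpi - bellman p R γ πt Qpi‖ := by
  have hdist := (bellman_contractingWith R hp (hπ.convexComb hπt hω₀ hω₁) hγ₀ hγ₁
    ).dist_le_of_fixedPoint Qpi hQpi'
  have hresidual : Qpi - bellman p R γ (fun s a => (1 - ω) * π s a + ω * πt s a) Qpi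
      = ω • (Qpi - bellman p R γ πt Qpi) := by
    rw [bellman_convexComb, hQpi]
    module
  rw [dist_eq_norm, dist_eq_norm, hresidual, norm_smul, Real.norm_of_nonneg hω₀,
    Real.coe_toNNReal γ hγ₀] at hdist
  rwa [div_mul_eq_mul_div]

theorem target_shift_bound_general {S A : Type*} [Fintype S] [Fintype A] [Nonempty S] [Nonempty A]
    (p : S → A → S → ℝ) (hp : IsKernel p)
    (R : S → A → ℝ)
    (γ : ℝ) (hγ : 0 < γ ∧ γ < 1)
    (π πt : S → A → ℝ) (hπ : IsPolicy π) (hπt : IsPolicy πt)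
    (ω : ℝ) (hω : 0 ≤ ω ∧ ω ≤ 1)
    (Q Qstar Qpi Qpi' : S → A → ℝ)
    (hQstar : bellmanOpt p R γ Qstar = Qstar)
    (hQpi : bellman p R γ π Qpi = Qpi)
    (hQpi' : bellman p R γ (fun s a => (1 - ω) * π s a + ω * πt s a) Qpi' = Qpi')
    (χ : ℝ)
    (hχ : χ = supNorm (fun s a => bellmanOpt p R γ Q s a - bellman p R γ πt Q s a)) :
    supNorm (fun s a => Qpi s a - Qpi' s a)
      ≤ (ω / (1 - γ)) * (supNorm (fun s a => Qstar s a - Qpi s a)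
          + 2 * supNorm (fun s a => Q s a - Qpi s a) + χ) := by
  obtain ⟨hγ₀, hγ₁⟩ := hγ
  subst hχ
  simp only [supNorm_eq_norm]
  calc ‖Qpi - Qpi'‖ ≤ ω / (1 - γ) * ‖Qpi - bellman p R γ πt Qpi‖ :=
        norm_sub_isFixedPt_bellman_convexComb_le hp hγ₀.le hγ₁ hπ hπt hω.1 hω.2 hQpi hQpi'
    _ ≤ ω / (1 - γ) * (‖Qstar - Qpi‖ + 2 * ‖Q - Qpi‖
          + ‖bellmanOpt p R γ Q - bellman p R γ πt Q‖) :=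
        mul_le_mul_of_nonneg_left
          (norm_sub_bellman_le hp hπ hπt hγ₀.le hγ₁ hQstar hQpi Q)
          (div_nonneg hω.1 (by linarith))

/-- Bound on the shift of the Q-function of the policy (Lemma A.5). -/
theorem target_shift_bound {S A : Type*} [Fintype S] [Fintype A] [Nonempty S] [Nonempty A]
    (p : S → A → S → ℝ) (hp : IsKernel p)
    (R : S → A → ℝ) (hR : ∀ s a, 0 ≤ R s a ∧ R s a ≤ 1)
    (γ : ℝ) (hγ : 0 < γ ∧ γ < 1)
    (π πt : S → A → ℝ) (hπ : IsPolicy π) (hπt : IsPolicy πt)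
    (ω : ℝ) (hω : 0 ≤ ω ∧ ω ≤ 1)
    (Q Qstar Qpi Qpi' : S → A → ℝ)
    (hQstar : bellmanOpt p R γ Qstar = Qstar)
    (hQpi : bellman p R γ π Qpi = Qpi)
    (hQpi' : bellman p R γ (fun s a => (1 - ω) * π s a + ω * πt s a) Qpi' = Qpi')
    (χ : ℝ)
    (hχ : χ = supNorm (fun s a => bellmanOpt p R γ Q s a - bellman p R γ πt Q s a)) :
    supNorm (fun s a => Qpi s a - Qpi' s a)
      ≤ (ω / (1 - γ)) * (supNorm (fun s a => Qstar s a - Qpi s a)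
          + 2 * supNorm (fun s a => Q s a - Qpi s a) + χ) :=
  target_shift_bound_general p hp R γ hγ π πt hπ hπt ω hω Q Qstar Qpi Qpi' hQstar hQpi hQpi' χ hχ
end

section
/- Let {π_t} be a sequence of policies satisfying π_{t+1} = (1-ω_t)π_t + ω_t π̃_t for some policies π̃_t and stepsizes ω_t ∈ [0,1]. Then for all nonnegative integers t₁ < t₂, ‖Q^{π_{t₁}} − Q^{π_{t₂}}‖∞ ≤ 2 (Σ_{u=t₁}^{t₂−1} ω_u) / (1−γ)². -/
section Aux

variable {S A : Type*} [Fintype S] [Fintype A] [Nonempty S] [Nonempty A]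

lemma supNorm_nonneg (Q : S → A → ℝ) : 0 ≤ supNorm Q := by
  obtain ⟨s⟩ := (inferInstance : Nonempty S)
  obtain ⟨a⟩ := (inferInstance : Nonempty A)
  exact le_trans (abs_nonneg (Q s a))
    (Finset.le_sup' (fun sa : S × A => |Q sa.1 sa.2|) (Finset.mem_univ (s, a)))

lemma abs_le_supNorm (Q : S → A → ℝ) (s : S) (a : A) : |Q s a| ≤ supNorm Q :=
  Finset.le_sup' (fun sa : S × A => |Q sa.1 sa.2|) (Finset.mem_univ (s, a))

lemma supNorm_le {Q : S → A → ℝ} {c : ℝ} (h : ∀ s a, |Q s a| ≤ c) : supNorm Q ≤ c :=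
  Finset.sup'_le _ _ fun sa _ => h sa.1 sa.2

lemma wsum_abs_le {ι : Type*} [Fintype ι] (w f : ι → ℝ) (hw : ∀ i, 0 ≤ w i)
    (hw1 : ∑ i, w i = 1) {c : ℝ} (hf : ∀ i, |f i| ≤ c) : |∑ i, w i * f i| ≤ c := by
  calc |∑ i, w i * f i| ≤ ∑ i, |w i * f i| := Finset.abs_sum_le_sum_abs _ _
    _ ≤ ∑ i, w i * c := Finset.sum_le_sum fun i _ => by
        rw [abs_mul, abs_of_nonneg (hw i)]
        exact mul_le_mul_of_nonneg_left (hf i) (hw i)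
    _ = c := by rw [← Finset.sum_mul, hw1, one_mul]

/-- A fixed point of the Bellman operator has sup norm at most 1/(1-γ). -/
lemma qfix_norm_le (p : S → A → S → ℝ) (hp : IsKernel p)
    (R : S → A → ℝ) (hR : ∀ s a, 0 ≤ R s a ∧ R s a ≤ 1)
    (γ : ℝ) (hγ : 0 < γ ∧ γ < 1)
    (π : S → A → ℝ) (hπ : IsPolicy π)
    (Q : S → A → ℝ) (hQ : bellman p R γ π Q = Q) :
    supNorm Q ≤ 1 / (1 - γ) := by
  have h1γ : 0 < 1 - γ := by linarith [hγ.2]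
  have key : supNorm Q ≤ 1 + γ * supNorm Q := by
    apply supNorm_le
    intro s a
    conv_lhs => rw [← hQ]
    have hinner : ∀ s', |∑ a', π s' a' * Q s' a'| ≤ supNorm Q := fun s' =>
      wsum_abs_le _ _ (hπ.1 s') (hπ.2 s') (fun a' => abs_le_supNorm Q s' a')
    have houter : |∑ s', p s a s' * ∑ a', π s' a' * Q s' a'| ≤ supNorm Q :=
      wsum_abs_le _ _ (fun s' => hp.1 s a s') (hp.2 s a) hinner
    calc |bellman p R γ π Q s a| ≤ |R s a| + |γ * ∑ s', p s a s' * ∑ a', π s' a' * Q s' a'| :=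
          abs_add_le _ _
      _ ≤ 1 + γ * supNorm Q := by
          rw [abs_mul, abs_of_nonneg hγ.1.le]
          have : |R s a| ≤ 1 := abs_le.mpr ⟨by linarith [(hR s a).1], (hR s a).2⟩
          have := mul_le_mul_of_nonneg_left houter hγ.1.le
          linarith
  rw [le_div_iff₀ h1γ]
  nlinarith [supNorm_nonneg Q]

/-- The key perturbation bound for fixed points of two Bellman operators. -/
lemma qfix_diff_le (p : S → A → S → ℝ) (hp : IsKernel p)
    (R : S → A → ℝ) (hR : ∀ s a, 0 ≤ R s a ∧ R s a ≤ 1)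
    (γ : ℝ) (hγ : 0 < γ ∧ γ < 1)
    (π π' : S → A → ℝ) (hπ : IsPolicy π) (hπ' : IsPolicy π')
    (Q Q' : S → A → ℝ) (hQ : bellman p R γ π Q = Q) (hQ' : bellman p R γ π' Q' = Q')
    (Δ : ℝ) (hΔ : ∀ s, ∑ a, |π s a - π' s a| ≤ Δ) :
    supNorm (fun s a => Q s a - Q' s a) ≤ Δ / (1 - γ) ^ 2 := by
  have h1γ : 0 < 1 - γ := by linarith [hγ.2]
  set N : ℝ := supNorm (fun s a => Q s a - Q' s a) with hN
  have hN' : supNorm Q' ≤ 1 / (1 - γ) := qfix_norm_le p hp R hR γ hγ π' hπ' Q' hQ'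
  have hN'0 : 0 ≤ supNorm Q' := supNorm_nonneg Q'
  have hΔ0 : 0 ≤ Δ := by
    obtain ⟨s⟩ := (inferInstance : Nonempty S)
    exact le_trans (Finset.sum_nonneg fun a _ => abs_nonneg _) (hΔ s)
  -- inner bound: for each s', |∑ π Q - ∑ π' Q'| ≤ N + Δ * supNorm Q'
  have hinner : ∀ s', |(∑ a', π s' a' * Q s' a') - ∑ a', π' s' a' * Q' s' a'|
      ≤ N + Δ * supNorm Q' := by
    intro s'
    have hdecomp : (∑ a', π s' a' * Q s' a') - ∑ a', π' s' a' * Q' s' a'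
        = (∑ a', π s' a' * (Q s' a' - Q' s' a')) + ∑ a', (π s' a' - π' s' a') * Q' s' a' := by
      rw [← Finset.sum_add_distrib, ← Finset.sum_sub_distrib]
      congr 1; ext a'; ring
    rw [hdecomp]
    have h1 : |∑ a', π s' a' * (Q s' a' - Q' s' a')| ≤ N :=
      wsum_abs_le _ _ (hπ.1 s') (hπ.2 s')
        (fun a' => abs_le_supNorm (fun s a => Q s a - Q' s a) s' a')
    have h2 : |∑ a', (π s' a' - π' s' a') * Q' s' a'| ≤ Δ * supNorm Q' := by
      calc |∑ a', (π s' a' - π' s' a') * Q' s' a'|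
          ≤ ∑ a', |(π s' a' - π' s' a') * Q' s' a'| := Finset.abs_sum_le_sum_abs _ _
        _ ≤ ∑ a', |π s' a' - π' s' a'| * supNorm Q' := by
            apply Finset.sum_le_sum; intro a' _
            rw [abs_mul]
            exact mul_le_mul_of_nonneg_left (abs_le_supNorm Q' s' a') (abs_nonneg _)
        _ = (∑ a', |π s' a' - π' s' a'|) * supNorm Q' := by rw [Finset.sum_mul]
        _ ≤ Δ * supNorm Q' := mul_le_mul_of_nonneg_right (hΔ s') hN'0
    calc |(∑ a', π s' a' * (Q s' a' - Q' s' a')) + ∑ a', (π s' a' - π' s' a') * Q' s' a'|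
        ≤ |∑ a', π s' a' * (Q s' a' - Q' s' a')| + |∑ a', (π s' a' - π' s' a') * Q' s' a'| :=
        abs_add_le _ _
      _ ≤ N + Δ * supNorm Q' := add_le_add h1 h2
  have key : N ≤ γ * (N + Δ * supNorm Q') := by
    apply supNorm_le
    intro s a
    have heq : Q s a - Q' s a
        = γ * ∑ s', p s a s' *
            ((∑ a', π s' a' * Q s' a') - ∑ a', π' s' a' * Q' s' a') := by
      conv_lhs => rw [← hQ, ← hQ']
      simp only [bellman, mul_sub, Finset.sum_sub_distrib]
      ring
    rw [heq, abs_mul, abs_of_nonneg hγ.1.le]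
    exact mul_le_mul_of_nonneg_left
      (wsum_abs_le _ _ (fun s' => hp.1 s a s') (hp.2 s a) hinner) hγ.1.le
  have step1 : (1 - γ) * N ≤ γ * Δ * supNorm Q' := by nlinarith [key]
  have hsn : (1 - γ) * supNorm Q' ≤ 1 := by
    rw [le_div_iff₀ h1γ] at hN'; linarith
  rw [le_div_iff₀ (by positivity : (0:ℝ) < (1 - γ) ^ 2)]
  have A1 : (1 - γ) * N * (1 - γ) ≤ γ * Δ * supNorm Q' * (1 - γ) :=
    mul_le_mul_of_nonneg_right step1 h1γ.le
  have A2 : γ * Δ * ((1 - γ) * supNorm Q') ≤ γ * Δ * 1 :=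
    mul_le_mul_of_nonneg_left hsn (mul_nonneg hγ.1.le hΔ0)
  have A3 : γ * Δ ≤ Δ := by nlinarith [hγ.2, hΔ0]
  nlinarith [A1, A2, A3]

lemma supNorm_triangle (f g h : S → A → ℝ) :
    supNorm (fun s a => f s a - h s a)
      ≤ supNorm (fun s a => f s a - g s a) + supNorm (fun s a => g s a - h s a) := by
  apply supNorm_le
  intro s a
  calc |f s a - h s a| = |(f s a - g s a) + (g s a - h s a)| := by ring_nf
    _ ≤ |f s a - g s a| + |g s a - h s a| := abs_add_le _ _
    _ ≤ _ := add_le_add (abs_le_supNorm (fun s a => f s a - g s a) s a)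
        (abs_le_supNorm (fun s a => g s a - h s a) s a)

end Aux

/-- Drift of the Q-functions of the policy iterates. -/
theorem qpi_drift {S A : Type*} [Fintype S] [Fintype A] [Nonempty S] [Nonempty A]
    (p : S → A → S → ℝ) (hp : IsKernel p)
    (R : S → A → ℝ) (hR : ∀ s a, 0 ≤ R s a ∧ R s a ≤ 1)
    (γ : ℝ) (hγ : 0 < γ ∧ γ < 1)
    (π πt : ℕ → S → A → ℝ) (ω : ℕ → ℝ)
    (hπ : ∀ t, IsPolicy (π t)) (hπt : ∀ t, IsPolicy (πt t))
    (hω : ∀ t, 0 ≤ ω t ∧ ω t ≤ 1)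
    (hupd : ∀ t s a, π (t + 1) s a = (1 - ω t) * π t s a + ω t * πt t s a)
    (Qpi : ℕ → S → A → ℝ)
    (hQpi : ∀ t, bellman p R γ (π t) (Qpi t) = Qpi t)
    (t₁ t₂ : ℕ) (h : t₁ < t₂) :
    supNorm (fun s a => Qpi t₁ s a - Qpi t₂ s a)
      ≤ 2 * (∑ u ∈ Finset.Ico t₁ t₂, ω u) / (1 - γ) ^ 2 := by
  have h1γ2 : (0:ℝ) < (1 - γ) ^ 2 := by
    have : 0 < 1 - γ := by linarith [hγ.2]
    positivity
  -- one-step bound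
  have step : ∀ t, supNorm (fun s a => Qpi t s a - Qpi (t + 1) s a)
      ≤ 2 * ω t / (1 - γ) ^ 2 := by
    intro t
    apply qfix_diff_le p hp R hR γ hγ (π t) (π (t + 1)) (hπ t) (hπ (t + 1))
      (Qpi t) (Qpi (t + 1)) (hQpi t) (hQpi (t + 1))
    intro s
    have : ∀ a, |π t s a - π (t + 1) s a| = ω t * |πt t s a - π t s a| := by
      intro a
      rw [hupd t s a]
      have : π t s a - ((1 - ω t) * π t s a + ω t * πt t s a)
          = ω t * (π t s a - πt t s a) := by ring
      rw [this, abs_mul, abs_of_nonneg (hω t).1, abs_sub_comm]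
    simp_rw [this, ← Finset.mul_sum]
    have hsum : ∑ a, |πt t s a - π t s a| ≤ 2 := by
      calc ∑ a, |πt t s a - π t s a| ≤ ∑ a, (πt t s a + π t s a) := by
            apply Finset.sum_le_sum; intro a _
            have h1 := (hπt t).1 s a
            have h2 := (hπ t).1 s a
            rw [abs_sub_le_iff]
            constructor <;> linarith
        _ = 2 := by rw [Finset.sum_add_distrib, (hπt t).2 s, (hπ t).2 s]; norm_num
    calc ω t * ∑ a, |πt t s a - π t s a| ≤ ω t * 2 :=
          mul_le_mul_of_nonneg_left hsum (hω t).1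
      _ = 2 * ω t := by ring
  -- telescope via induction on t₂
  induction t₂, h using Nat.le_induction with
  | base =>
      have := step t₁
      rwa [Nat.Ico_succ_singleton, Finset.sum_singleton]
  | succ n hn ih =>
      have htri := supNorm_triangle (Qpi t₁) (Qpi n) (Qpi (n + 1))
      have hsum : ∑ u ∈ Finset.Ico t₁ (n + 1), ω u
          = (∑ u ∈ Finset.Ico t₁ n, ω u) + ω n := Finset.sum_Ico_succ_top (Nat.le_of_succ_le hn) _
      have hstep := step n
      rw [hsum]
      calc supNorm (fun s a => Qpi t₁ s a - Qpi (n + 1) s a)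
          ≤ supNorm (fun s a => Qpi t₁ s a - Qpi n s a)
            + supNorm (fun s a => Qpi n s a - Qpi (n + 1) s a) := htri
        _ ≤ 2 * (∑ u ∈ Finset.Ico t₁ n, ω u) / (1 - γ) ^ 2 + 2 * ω n / (1 - γ) ^ 2 :=
            add_le_add ih hstep
        _ = 2 * ((∑ u ∈ Finset.Ico t₁ n, ω u) + ω n) / (1 - γ) ^ 2 := by ring
end
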